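/- arXiv:2310.12370 — 6 statements merged into one kernel-verified Lean document; each statement's English description precedes it below -/
import Mathlib

section
/- For any sequence of valuations (s_t, b_t) in [0,1]^2 for t = 1,...,T and any positive integer K, we have max_{p ∈ [0,1]} Σ_{t=1}^T GFT_t(p,p) ≤ max_{(p,q) ∈ H_K} Σ_{t=1}^T GFT_t(p,q) + T/K, where H_K = {((i+1)/K, i/K) : i ∈ {0,...,K-1}}. -/
/-!
Let `p` lie in the grid cell `[i/K, (i+1)/K]` and post `(i+1)/K` to the seller and `i/K` to
the buyer. Every trade that happens at price `p` still happens, with the same gain, and every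
extra trade has `b - s ≥ i/K - (i+1)/K = -1/K`. So each round loses at most `1/K`.
-/

open Finset

/-- Gain from trade: price `p` posted to the seller (valuation `s`),
price `q` to the buyer (valuation `b`). -/
noncomputable def gft (s b p q : ℝ) : ℝ :=
  (if s ≤ p then (1:ℝ) else 0) * (if q ≤ b then (1:ℝ) else 0) * (b - s)

lemma gft_le_gft_add_sub {s b p lo hi : ℝ} (hlo : lo ≤ p) (hhi : p ≤ hi) :
    gft s b p p ≤ gft s b hi lo + (hi - lo) := by
  unfold gft
  split_ifs <;> nlinarith

lemma sum_gft_le_sum_gft_add {ι : Type*} (S : Finset ι) (s b : ι → ℝ) {p lo hi : ℝ}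
    (hlo : lo ≤ p) (hhi : p ≤ hi) :
    ∑ t ∈ S, gft (s t) (b t) p p ≤ ∑ t ∈ S, gft (s t) (b t) hi lo + #S * (hi - lo) := by
  calc ∑ t ∈ S, gft (s t) (b t) p p
      ≤ ∑ t ∈ S, (gft (s t) (b t) hi lo + (hi - lo)) :=
        sum_le_sum fun t _ => gft_le_gft_add_sub hlo hhi
    _ = ∑ t ∈ S, gft (s t) (b t) hi lo + #S * (hi - lo) := by
        rw [sum_add_distrib, sum_const, nsmul_eq_mul]

lemma exists_lt_div_le_le_add_one_div {K : ℕ} (hK : 0 < K) {p : ℝ}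
    (hp : p ∈ Set.Icc (0 : ℝ) 1) :
    ∃ i < K, (i : ℝ) / K ≤ p ∧ p ≤ ((i : ℝ) + 1) / K := by
  have hKR : (0 : ℝ) < K := by exact_mod_cast hK
  set n := ⌊p * K⌋₊
  -- capping the index at `K - 1` puts `p = 1` in the last cell
  refine ⟨min n (K - 1), by omega, ?_, ?_⟩
  · rw [div_le_iff₀ hKR]
    calc ((min n (K - 1) : ℕ) : ℝ) ≤ n := by exact_mod_cast min_le_left _ _
      _ ≤ p * K := Nat.floor_le (mul_nonneg hp.1 hKR.le)
  · have hsucc : ((min n (K - 1) : ℕ) : ℝ) + 1 = min ((n : ℝ) + 1) K := by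
      rw [← Nat.cast_succ, ← Nat.cast_succ, ← Nat.cast_min]
      congr 1
      omega
    rw [le_div_iff₀ hKR, hsucc]
    exact le_min (Nat.lt_floor_add_one _).le (by nlinarith [hp.2])

theorem stmt_1_general (T K : ℕ) (hK : 0 < K) (s b : ℕ → ℝ) :
    ∀ p ∈ Set.Icc (0:ℝ) 1,
      ∑ t ∈ range T, gft (s t) (b t) p p ≤
        (range K).sup' (nonempty_range_iff.mpr hK.ne')
          (fun i => ∑ t ∈ range T, gft (s t) (b t) (((i:ℝ)+1)/K) ((i:ℝ)/K))
        + (T:ℝ)/K := by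
  intro p hp
  obtain ⟨i, hiK, hlo, hhi⟩ := exists_lt_div_le_le_add_one_div hK hp
  have hwidth : ((i : ℝ) + 1) / K - i / K = 1 / K := by ring
  calc ∑ t ∈ range T, gft (s t) (b t) p p
      ≤ ∑ t ∈ range T, gft (s t) (b t) (((i:ℝ)+1)/K) ((i:ℝ)/K) + T / K :=
        (sum_gft_le_sum_gft_add (range T) s b hlo hhi).trans_eq
          (by rw [card_range, hwidth, mul_one_div])
    _ ≤ _ := by
        gcongr
        exact le_sup' (fun j : ℕ => ∑ t ∈ range T, gft (s t) (b t) (((j:ℝ)+1)/K) ((j:ℝ)/K))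
          (mem_range.mpr hiK)

/-- `max_{p∈[0,1]} Σ_t GFT_t(p,p) ≤ max_{(p,q)∈H_K} Σ_t GFT_t(p,q) + T/K`. -/
theorem stmt_1 (T K : ℕ) (hK : 0 < K) (s b : ℕ → ℝ)
    (hvals : ∀ t, s t ∈ Set.Icc (0:ℝ) 1 ∧ b t ∈ Set.Icc (0:ℝ) 1) :
    ∀ p ∈ Set.Icc (0:ℝ) 1,
      ∑ t ∈ range T, gft (s t) (b t) p p ≤
        (range K).sup' (nonempty_range_iff.mpr hK.ne')
          (fun i => ∑ t ∈ range T, gft (s t) (b t) (((i:ℝ)+1)/K) ((i:ℝ)/K))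
        + (T:ℝ)/K :=
  stmt_1_general T K hK s b
end

section
/- For any sequence of valuations (s_t, b_t) in [0,1]^2 for t = 1,...,T and any K-uniform grid G_K = {0, 1/K, 2/K, ..., 1}, it holds that max_{p ∈ [0,1]} Σ_{t=1}^T GFT_t(p) ≤ 2·max_{p ∈ G_K} Σ_{t=1}^T GFT_t(p) + T/K. -/
/-!
If the trade at price `p` succeeds and `q ≤ p ≤ q'`, then it also succeeds at `q` (when `s ≤ q`)
or at `q'` (when `q' ≤ b`); otherwise `q < s ≤ b < q'`, so the lost gain `b - s` is below
`q' - q`. Applied to the two grid points around `p`, summed over `t`, and with both grid sums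
bounded by the grid maximum, this gives the factor `2` and the additive `T / K`.
-/

open Finset

/-- Gain from trade of the single price `p` posted to both agents. -/
noncomputable def gftSingle (s b p : ℝ) : ℝ :=
  (if s ≤ p ∧ p ≤ b then (1:ℝ) else 0) * (b - s)

lemma gftSingle_nonneg (s b p : ℝ) : 0 ≤ gftSingle s b p := by
  unfold gftSingle
  split_ifs with h
  · linarith [h.1.trans h.2]
  · simp

lemma gftSingle_le_add_add_sub {s b p q q' : ℝ} (hq : q ≤ p) (hq' : p ≤ q') :
    gftSingle s b p ≤ gftSingle s b q + gftSingle s b q' + (q' - q) := by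
  have hq_nonneg := gftSingle_nonneg s b q
  have hq'_nonneg := gftSingle_nonneg s b q'
  by_cases htrade : s ≤ p ∧ p ≤ b
  · obtain ⟨hsp, hpb⟩ := htrade
    have hp : gftSingle s b p = b - s := by simp [gftSingle, hsp, hpb]
    by_cases hsq : s ≤ q
    · have : gftSingle s b q = b - s := by simp [gftSingle, hsq, hq.trans hpb]
      linarith
    by_cases hq'b : q' ≤ b
    · have : gftSingle s b q' = b - s := by simp [gftSingle, hq'b, hsp.trans hq']
      linarith
    linarith [not_le.mp hsq, not_le.mp hq'b]
  · have : gftSingle s b p = 0 := by simp [gftSingle, htrade]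
    linarith

lemma exists_nat_div_le_le_succ_div {p : ℝ} (hp : p ∈ Set.Icc (0:ℝ) 1) {K : ℕ} (hK : 0 < K) :
    ∃ i < K, (i:ℝ) / K ≤ p ∧ p ≤ ((i + 1 : ℕ):ℝ) / K := by
  have hKR : (0:ℝ) < K := by exact_mod_cast hK
  by_cases hp1 : p = 1
  · refine ⟨K - 1, Nat.sub_lt hK one_pos, ?_, ?_⟩
    · rw [hp1, div_le_one hKR]
      exact_mod_cast Nat.sub_le K 1
    · rw [hp1, Nat.sub_one_add_one hK.ne', div_self hKR.ne']
  have hpK : p * K < K := by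
    nlinarith [lt_of_le_of_ne hp.2 hp1]
  refine ⟨⌊p * K⌋₊, (Nat.floor_lt (by nlinarith [hp.1])).mpr hpK, ?_, ?_⟩
  · rw [div_le_iff₀ hKR]
    exact Nat.floor_le (by nlinarith [hp.1])
  · rw [le_div_iff₀ hKR]
    push_cast
    exact (Nat.lt_floor_add_one _).le

theorem stmt_4_general (T K : ℕ) (hK : 0 < K) (s b : ℕ → ℝ) :
    ∀ p ∈ Set.Icc (0:ℝ) 1,
      ∑ t ∈ range T, gftSingle (s t) (b t) p ≤
        2 * ((range (K+1)).sup' nonempty_range_add_one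
              (fun i => ∑ t ∈ range T, gftSingle (s t) (b t) ((i:ℝ)/K)))
        + (T:ℝ)/K := by
  intro p hp
  obtain ⟨i, hiK, hlow, hhigh⟩ := exists_nat_div_le_le_succ_div hp hK
  set F : ℕ → ℝ := fun j => ∑ t ∈ range T, gftSingle (s t) (b t) ((j:ℝ)/K)
  have hF_le : ∀ j ≤ K, F j ≤ (range (K+1)).sup' nonempty_range_add_one F :=
    fun j hj => le_sup' F (mem_range.mpr (Nat.lt_succ_of_le hj))
  have hstep : ((i + 1 : ℕ):ℝ) / K - (i:ℝ) / K = 1 / K := by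
    push_cast
    ring
  calc ∑ t ∈ range T, gftSingle (s t) (b t) p
      ≤ ∑ t ∈ range T, (gftSingle (s t) (b t) ((i:ℝ)/K)
          + gftSingle (s t) (b t) (((i + 1 : ℕ):ℝ)/K) + 1 / K) :=
        sum_le_sum fun t _ => hstep ▸ gftSingle_le_add_add_sub hlow hhigh
    _ = F i + F (i + 1) + T / K := by
        simp only [F, sum_add_distrib, sum_const, card_range, nsmul_eq_mul]
        ring
    _ ≤ 2 * (range (K+1)).sup' nonempty_range_add_one F + T / K := by
        linarith [hF_le i hiK.le, hF_le (i + 1) hiK]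

/-- `max_{p∈[0,1]} Σ_t GFT_t(p) ≤ 2·max_{p∈G_K} Σ_t GFT_t(p) + T/K`. -/
theorem stmt_4 (T K : ℕ) (hK : 0 < K) (s b : ℕ → ℝ)
    (hvals : ∀ t, s t ∈ Set.Icc (0:ℝ) 1 ∧ b t ∈ Set.Icc (0:ℝ) 1) :
    ∀ p ∈ Set.Icc (0:ℝ) 1,
      ∑ t ∈ range T, gftSingle (s t) (b t) p ≤
        2 * ((range (K+1)).sup' nonempty_range_add_one
              (fun i => ∑ t ∈ range T, gftSingle (s t) (b t) ((i:ℝ)/K)))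
        + (T:ℝ)/K :=
  stmt_4_general T K hK s b
end

section
/- Consider any sequence of valuations (s_t, b_t) ∈ [0,1]^2 for t = 1,...,T, any integer K with 1 ≤ K ≤ T, and the grid F_K = F_K^- ∪ F_K^+ where F_K^- = {(p − 2^{-i}, p) : p ∈ G_K, i ∈ {0,...,⌊log₂ T⌋}} ∩ [0,1]^2 and F_K^+ = {(p, p + 2^{-i}) : p ∈ G_K, i ∈ {0,...,⌊log₂ T⌋}} ∩ [0,1]^2, with G_K the K-uniform grid. Then max_{p ∈ [0,1]} Σ_{t=1}^T GFT_t(p) ≤ 8·log₂(T)·max_{(p,q) ∈ F_K} Σ_{t=1}^T REV_t(p,q) + 5T/K. -/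
open Finset

noncomputable def rev (s b p q : ℝ) : ℝ :=
  (if s ≤ p then (1:ℝ) else 0) * (if q ≤ b then (1:ℝ) else 0) * (q - p)

/-- The "multiplicative-additive" grid `F_K = F_K^- ∪ F_K^+`. -/
def FGrid (T K : ℕ) : Set (ℝ × ℝ) :=
  {pq | (∃ k ≤ K, ∃ i ≤ Nat.log 2 T,
          pq = (((k:ℝ)/K - (2:ℝ)^(-(i:ℤ)), (k:ℝ)/K)) ∨
          pq = (((k:ℝ)/K, (k:ℝ)/K + (2:ℝ)^(-(i:ℤ))))) ∧
        pq.1 ∈ Set.Icc (0:ℝ) 1 ∧ pq.2 ∈ Set.Icc (0:ℝ) 1}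

lemma rev_nonneg' (s b p q : ℝ) (h : p ≤ q) : 0 ≤ rev s b p q := by
  unfold rev
  apply mul_nonneg (mul_nonneg ?_ ?_) (sub_nonneg.2 h) <;> split_ifs <;> norm_num

lemma rev_eq' (s b p q : ℝ) (h1 : s ≤ p) (h2 : q ≤ b) : rev s b p q = q - p := by
  unfold rev; rw [if_pos h1, if_pos h2]; ring

lemma dyadic_lemma (L : ℕ) (x : ℝ) (hx1 : x ≤ 1) (hxL : (2:ℝ)^(-(L:ℤ)) ≤ x) :
    ∃ i ∈ range (L+1), (2:ℝ)^(-(i:ℤ)) ≤ x ∧ x ≤ 2 * (2:ℝ)^(-(i:ℤ)) := by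
  classical
  have hex : ∃ i : ℕ, (2:ℝ)^(-(i:ℤ)) ≤ x := ⟨L, hxL⟩
  refine ⟨Nat.find hex, mem_range.2 (Nat.lt_succ_of_le (Nat.find_min' hex hxL)),
    Nat.find_spec hex, ?_⟩
  rcases Nat.eq_zero_or_pos (Nat.find hex) with h0 | hpos
  · rw [h0]; norm_num; linarith
  · set i := Nat.find hex with hi
    have hij : i = (i - 1) + 1 := (Nat.succ_pred_eq_of_pos hpos).symm
    have hnot : ¬ ((2:ℝ)^(-((i-1 : ℕ):ℤ)) ≤ x) := Nat.find_min hex (by omega)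
    push_neg at hnot
    have heq : (2:ℝ)^(-((i-1 : ℕ):ℤ)) = 2 * (2:ℝ)^(-(i:ℤ)) := by
      have h1 : ((i - 1 : ℕ) : ℤ) = (i : ℤ) - 1 := by omega
      rw [h1, show -((i:ℤ) - 1) = 1 + -(i:ℤ) by ring, zpow_add₀ (by norm_num : (2:ℝ) ≠ 0)]
      norm_num
    linarith [heq ▸ hnot]

/-- `max_{p∈[0,1]} Σ_t GFT_t(p) ≤ 8·log₂T·max_{(p,q)∈F_K} Σ_t REV_t(p,q) + 5T/K`. -/
theorem stmt_6 (T K : ℕ) (hK : 1 ≤ K) (hKT : K ≤ T)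
    (s b : ℕ → ℝ) (hvals : ∀ t, s t ∈ Set.Icc (0:ℝ) 1 ∧ b t ∈ Set.Icc (0:ℝ) 1) :
    ∀ p ∈ Set.Icc (0:ℝ) 1, ∃ q r : ℝ, (q, r) ∈ FGrid T K ∧
      ∑ t ∈ range T, gftSingle (s t) (b t) p ≤
        8 * Real.logb 2 T * ∑ t ∈ range T, rev (s t) (b t) q r + 5 * (T:ℝ)/K := by
  intro p hp
  classical
  have hKpos : (0:ℝ) < K := by exact_mod_cast hK
  have hgrid01 : ((0:ℝ), (1:ℝ)) ∈ FGrid T K := by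
    refine ⟨⟨K, le_refl _, 0, Nat.zero_le _, Or.inl ?_⟩, by norm_num, by norm_num⟩
    have hKK : ((K:ℝ))/K = 1 := div_self (ne_of_gt hKpos)
    norm_num [hKK]
  rcases le_or_gt T 1 with hT1 | hT2
  · -- T ≤ 1 : use the point (0,1) and the additive term
    refine ⟨0, 1, hgrid01, ?_⟩
    have hlog0 : Real.logb 2 (T:ℝ) = 0 := by interval_cases T <;> simp
    have hLHS : ∑ t ∈ range T, gftSingle (s t) (b t) p ≤ T := by
      calc ∑ t ∈ range T, gftSingle (s t) (b t) p ≤ ∑ t ∈ range T, (1:ℝ) := by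
            apply sum_le_sum
            intro t _
            obtain ⟨⟨hs0, hs1⟩, ⟨hb0, hb1⟩⟩ := hvals t
            unfold gftSingle
            split_ifs <;> nlinarith
        _ = T := by simp
    have hTK : (T:ℝ) ≤ 5 * T / K := by
      have hT1' : T = 1 := by omega
      have hK1 : K = 1 := by omega
      rw [hT1', hK1]; norm_num
    rw [hlog0]
    simpa using le_trans hLHS hTK
  · -- main case : T ≥ 2
    set L := Nat.log 2 T with hLdef
    obtain ⟨hp0, hp1⟩ := hp
    have hpK0 : 0 ≤ p * K := mul_nonneg hp0 (le_of_lt hKpos)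
    set qp : ℝ := (⌈p * K⌉₊ : ℝ) / K with hqpdef
    set qm : ℝ := (⌊p * K⌋₊ : ℝ) / K with hqmdef
    have hqm_le : qm ≤ p := by
      rw [hqmdef, div_le_iff₀ hKpos]
      exact Nat.floor_le hpK0
    have hle_qp : p ≤ qp := by
      rw [hqpdef, le_div_iff₀ hKpos]
      exact Nat.le_ceil _
    have hceil_le : ⌈p * K⌉₊ ≤ K := by
      apply Nat.ceil_le.2
      calc p * K ≤ 1 * K := by nlinarith
        _ = (K:ℝ) := one_mul _
    have hfloor_le : ⌊p * K⌋₊ ≤ K := le_trans (Nat.floor_le_ceil _) hceil_le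
    have hqp1 : qp ≤ 1 := by
      rw [hqpdef, div_le_one hKpos]; exact_mod_cast hceil_le
    have hqm0 : 0 ≤ qm := by positivity
    have hqm1 : qm ≤ 1 := le_trans hqm_le hp1
    have hqp0 : 0 ≤ qp := le_trans (le_trans hqm0 hqm_le) hle_qp
    have hgap : qp - qm ≤ 1 / K := by
      rw [hqpdef, hqmdef, div_sub_div_same, div_le_div_iff₀ hKpos hKpos]
      have := Nat.ceil_le_floor_add_one (p * K)
      have hc : ((⌈p * K⌉₊ : ℝ)) ≤ (⌊p * K⌋₊ : ℝ) + 1 := by exact_mod_cast this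
      nlinarith
    have h2L : (2:ℝ)^(-(L:ℤ)) ≤ 2 / K := by
      have hTlt : T < 2 ^ (L + 1) := Nat.lt_pow_succ_log_self (by norm_num) T
      have hKlt : (K:ℝ) < 2 ^ (L + 1) := by exact_mod_cast lt_of_le_of_lt hKT hTlt
      have h2pow : (0:ℝ) < 2 ^ (L:ℕ) := by positivity
      have hKlt' : (K:ℝ) < 2 ^ (L:ℕ) * 2 := by rw [← pow_succ]; exact hKlt
      rw [le_div_iff₀ hKpos, zpow_neg, zpow_natCast, inv_mul_le_iff₀ h2pow]
      linarith
    set Pp : ℕ → ℝ × ℝ := fun i => (qp, qp + (2:ℝ)^(-(i:ℤ))) with hPpdef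
    set Pm : ℕ → ℝ × ℝ := fun j => (qm - (2:ℝ)^(-(j:ℤ)), qm) with hPmdef
    set R : ℝ × ℝ → ℝ := fun x => ∑ t ∈ range T, rev (s t) (b t) x.1 x.2 with hRdef
    set C : Finset (ℝ × ℝ) :=
      insert ((0:ℝ),(1:ℝ))
        ((((range (L+1)).image Pp) ∪ ((range (L+1)).image Pm)).filter (· ∈ FGrid T K)) with hCdef
    obtain ⟨mp, hmpC, hmax⟩ := C.exists_max_image R ⟨_, mem_insert_self _ _⟩
    have hmpGrid : mp ∈ FGrid T K := by
      rcases mem_insert.1 hmpC with h | h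
      · rw [h]; exact hgrid01
      · exact (mem_filter.1 h).2
    have hrevnn_p : ∀ i t, 0 ≤ rev (s t) (b t) (Pp i).1 (Pp i).2 := by
      intro i t
      apply rev_nonneg'
      simp only [hPpdef]
      have : (0:ℝ) < (2:ℝ)^(-(i:ℤ)) := by positivity
      linarith
    have hrevnn_m : ∀ j t, 0 ≤ rev (s t) (b t) (Pm j).1 (Pm j).2 := by
      intro j t
      apply rev_nonneg'
      simp only [hPmdef]
      have : (0:ℝ) < (2:ℝ)^(-(j:ℤ)) := by positivity
      linarith
    have hR01 : 0 ≤ R ((0:ℝ),(1:ℝ)) :=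
      sum_nonneg fun t _ => rev_nonneg' _ _ _ _ (by norm_num)
    have hRmp : 0 ≤ R mp := le_trans hR01 (hmax _ (mem_insert_self _ _))
    have hboundPp : ∀ i ∈ range (L+1), R (Pp i) ≤ R mp := by
      intro i hi
      by_cases hle : qp + (2:ℝ)^(-(i:ℤ)) ≤ 1
      · apply hmax
        apply mem_insert_of_mem
        refine mem_filter.2 ⟨mem_union_left _ (mem_image_of_mem _ hi), ?_⟩
        refine ⟨⟨⌈p * K⌉₊, hceil_le, i, Nat.lt_succ_iff.1 (mem_range.1 hi), Or.inr rfl⟩, ⟨hqp0, hqp1⟩,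
          ⟨by positivity, hle⟩⟩
      · have hz : R (Pp i) = 0 := by
          apply sum_eq_zero
          intro t _
          have hb1 := (hvals t).2.2
          have hne : ¬ ((Pp i).2 ≤ b t) := by
            simp only [hPpdef]; push_neg at hle ⊢; linarith
          unfold rev
          rw [if_neg hne]
          ring
        rw [hz]; exact hRmp
    have hboundPm : ∀ j ∈ range (L+1), R (Pm j) ≤ R mp := by
      intro j hj
      by_cases hle : 0 ≤ qm - (2:ℝ)^(-(j:ℤ))
      · apply hmax
        apply mem_insert_of_mem
        refine mem_filter.2 ⟨mem_union_right _ (mem_image_of_mem _ hj), ?_⟩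
        refine ⟨⟨⌊p * K⌋₊, hfloor_le, j, Nat.lt_succ_iff.1 (mem_range.1 hj), Or.inl rfl⟩,
          ⟨hle, ?_⟩, ⟨hqm0, hqm1⟩⟩
        have h2j : (0:ℝ) < (2:ℝ)^(-(j:ℤ)) := by positivity
        show qm - (2:ℝ)^(-(j:ℤ)) ≤ 1
        linarith
      · have hz : R (Pm j) = 0 := by
          apply sum_eq_zero
          intro t _
          have hs0 := (hvals t).1.1
          have hne : ¬ (s t ≤ (Pm j).1) := by
            simp only [hPmdef]; push_neg at hle ⊢; linarith
          unfold rev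
          rw [if_neg hne]
          ring
        rw [hz]; exact hRmp
    -- pointwise bound
    have hptwise : ∀ t ∈ range T,
        gftSingle (s t) (b t) p ≤
          2 * ∑ i ∈ range (L+1), rev (s t) (b t) (Pp i).1 (Pp i).2
          + 2 * ∑ j ∈ range (L+1), rev (s t) (b t) (Pm j).1 (Pm j).2 + 5 / K := by
      intro t _
      obtain ⟨⟨hs0, hs1⟩, ⟨hb0, hb1⟩⟩ := hvals t
      have hApos : 0 ≤ ∑ i ∈ range (L+1), rev (s t) (b t) (Pp i).1 (Pp i).2 :=
        sum_nonneg fun i _ => hrevnn_p i t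
      have hBpos : 0 ≤ ∑ j ∈ range (L+1), rev (s t) (b t) (Pm j).1 (Pm j).2 :=
        sum_nonneg fun j _ => hrevnn_m j t
      have h5K : 0 < 5 / (K:ℝ) := by positivity
      by_cases htr : s t ≤ p ∧ p ≤ b t
      · rw [gftSingle, if_pos htr, one_mul]
        have hbuy : b t - qp ≤
            2 * ∑ i ∈ range (L+1), rev (s t) (b t) (Pp i).1 (Pp i).2 + 2 / K := by
          by_cases hbig : (2:ℝ)^(-(L:ℤ)) ≤ b t - qp
          · obtain ⟨i, hiR, h1, h2⟩ := dyadic_lemma L _ (by linarith) hbig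
            have hrev : rev (s t) (b t) (Pp i).1 (Pp i).2 = (2:ℝ)^(-(i:ℤ)) := by
              show rev (s t) (b t) qp (qp + (2:ℝ)^(-(i:ℤ))) = _
              rw [rev_eq' _ _ _ _ (le_trans htr.1 hle_qp) (by linarith)]; ring
            have hsingle := Finset.single_le_sum (fun i _ => hrevnn_p i t) hiR
            have h2K : (0:ℝ) ≤ 2 / K := by positivity
            rw [hrev] at hsingle
            linarith
          · push_neg at hbig
            linarith
        have hsell : qm - s t ≤
            2 * ∑ j ∈ range (L+1), rev (s t) (b t) (Pm j).1 (Pm j).2 + 2 / K := by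
          by_cases hbig : (2:ℝ)^(-(L:ℤ)) ≤ qm - s t
          · obtain ⟨j, hjR, h1, h2⟩ := dyadic_lemma L _ (by linarith) hbig
            have hrev : rev (s t) (b t) (Pm j).1 (Pm j).2 = (2:ℝ)^(-(j:ℤ)) := by
              show rev (s t) (b t) (qm - (2:ℝ)^(-(j:ℤ))) qm = _
              rw [rev_eq' _ _ _ _ (by linarith) (le_trans hqm_le htr.2)]; ring
            have hsingle := Finset.single_le_sum (fun j _ => hrevnn_m j t) hjR
            have h2K : (0:ℝ) ≤ 2 / K := by positivity
            rw [hrev] at hsingle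
            linarith
          · push_neg at hbig
            linarith
        have h5 : (5:ℝ) / K = 2 / K + 1 / K + 2 / K := by ring
        linarith
      · rw [gftSingle, if_neg htr, zero_mul]
        linarith
    have hsum : ∑ t ∈ range T, gftSingle (s t) (b t) p ≤
        2 * ∑ i ∈ range (L+1), R (Pp i) + 2 * ∑ j ∈ range (L+1), R (Pm j)
          + (T:ℝ) * (5 / K) := by
      calc ∑ t ∈ range T, gftSingle (s t) (b t) p
          ≤ ∑ t ∈ range T,
            (2 * ∑ i ∈ range (L+1), rev (s t) (b t) (Pp i).1 (Pp i).2
            + 2 * ∑ j ∈ range (L+1), rev (s t) (b t) (Pm j).1 (Pm j).2 + 5 / K) :=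
            sum_le_sum hptwise
        _ = 2 * ∑ i ∈ range (L+1), R (Pp i) + 2 * ∑ j ∈ range (L+1), R (Pm j)
            + (T:ℝ) * (5 / K) := by
            rw [sum_add_distrib, sum_add_distrib, sum_const, card_range, nsmul_eq_mul]
            congr 1
            congr 1
            · simp only [hRdef]
              rw [← mul_sum, Finset.sum_comm]
            · simp only [hRdef]
              rw [← mul_sum, Finset.sum_comm]
    have hcapP : ∑ i ∈ range (L+1), R (Pp i) ≤ ((L:ℝ)+1) * R mp := by
      calc ∑ i ∈ range (L+1), R (Pp i) ≤ ∑ _i ∈ range (L+1), R mp := sum_le_sum hboundPp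
        _ = ((L:ℝ)+1) * R mp := by rw [sum_const, card_range, nsmul_eq_mul]; push_cast; ring
    have hcapM : ∑ j ∈ range (L+1), R (Pm j) ≤ ((L:ℝ)+1) * R mp := by
      calc ∑ j ∈ range (L+1), R (Pm j) ≤ ∑ _j ∈ range (L+1), R mp := sum_le_sum hboundPm
        _ = ((L:ℝ)+1) * R mp := by rw [sum_const, card_range, nsmul_eq_mul]; push_cast; ring
    have hlog : 4 * ((L:ℝ)+1) ≤ 8 * Real.logb 2 T := by
      have h1 : (L:ℝ) ≤ Real.logb 2 T := by
        have := Real.natLog_le_logb T 2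
        simpa [hLdef] using this
      have h2 : (1:ℝ) ≤ Real.logb 2 T := by
        rw [show (1:ℝ) = Real.logb 2 2 by simp]
        gcongr
        · norm_num
        · exact_mod_cast hT2
      linarith
    refine ⟨mp.1, mp.2, by simpa using hmpGrid, ?_⟩
    have hmul := mul_le_mul_of_nonneg_right hlog hRmp
    have hfin : (T:ℝ) * (5 / K) = 5 * (T:ℝ) / K := by ring
    have hRmpeq : R mp = ∑ t ∈ range T, rev (s t) (b t) mp.1 mp.2 := rfl
    rw [← hRmpeq]
    linarith
end

section
/- Fix valuations (s,b) ∈ [0,1]^2, a price p ∈ [0,1], and K ≥ 1 with p + 1/K ≤ 1. The one-bit estimator ĜFT of the previous construction satisfies |GFT(p + 1/K, p) − E[ĜFT]| ≤ 2/K, where GFT(p + 1/K, p) = 1{s ≤ p + 1/K}·1{p ≤ b}·(b − s). -/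
/-- The one-bit estimator has bias at most `2/K`:
`|GFT(p+1/K, p) − E[ĜFT]| ≤ 2/K`. -/
theorem stmt_9 (s b p : ℝ) (K : ℕ) (hK : 1 ≤ K)
    (hs : s ∈ Set.Icc (0:ℝ) 1) (hb : b ∈ Set.Icc (0:ℝ) 1)
    (hp : p ∈ Set.Icc (0:ℝ) 1) (hpc : p + 1/K ≤ 1) :
    |(if s ≤ p + 1/K then (1:ℝ) else 0) * (if p ≤ b then (1:ℝ) else 0) * (b - s)
      - (1 / (1 + 1/K)) * (b - s + 1/K) *
          (if s ≤ p + 1/K then (1:ℝ) else 0) * (if p ≤ b then (1:ℝ) else 0)| ≤ 2 / K := by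
  have hKpos : (0:ℝ) < K := by exact_mod_cast Nat.lt_of_lt_of_le Nat.zero_lt_one hK
  have hε : (0:ℝ) < 1/K := by positivity
  have h2K : (0:ℝ) ≤ 2 / K := by positivity
  obtain ⟨hs0, hs1⟩ := hs
  obtain ⟨hb0, hb1⟩ := hb
  have hden : (0:ℝ) < 1 + 1/K := by linarith
  split_ifs with h1 h2
  · have heq : (1:ℝ) * 1 * (b - s) - 1 / (1 + 1/K) * (b - s + 1/K) * 1 * 1
        = (1/K) * ((b - s) - 1) / (1 + 1/K) := by
      field_simp
      ring
    rw [heq, abs_le]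
    constructor
    · rw [le_div_iff₀ hden]
      nlinarith [mul_le_mul_of_nonneg_left (show (-2:ℝ) ≤ b - s - 1 by linarith) hε.le,
        mul_pos hε hε, show 2/(K:ℝ) = 2*(1/K) by ring]
    · rw [div_le_iff₀ hden]
      nlinarith [mul_le_mul_of_nonneg_left (show b - s - 1 ≤ 0 by linarith) hε.le,
        mul_pos hε hε, show 2/(K:ℝ) = 2*(1/K) by ring]
  · simpa using h2K
  · simpa using h2K
  · simpa using h2K
end

section
/- Fix a sequence of valuations (s_t,b_t) ∈ [0,1]^2 for t = 1,...,T. Let p* be a best fixed price, i.e., a maximizer of p ↦ Σ_t GFT_t(p,p), and let γ* be any probability distribution on [0,1]^2 satisfying E_{(p,q)∼γ*}[Σ_{t=1}^T REV_t(p,q)] ≥ 0. Then E_{(p,q)∼γ*}[Σ_{t=1}^T GFT_t(p,q)] ≤ 2·Σ_{t=1}^T GFT_t(p*, p*). -/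
/-!
At a price pair `(p, q)` where trade happens, gain from trade plus revenue equals
`(b - p) + (q - s)`, and a case analysis shows this never exceeds `GFT(p, p) + GFT(q, q)`.
Summing over rounds, each diagonal term is at most the gain from trade of the best fixed
price, so `GFT(p, q) + REV(p, q) ≤ 2 OPT` for every pair in `[0,1]²`. Integrating against `γ`
and using that the expected revenue is nonnegative gives the bound.
-/

open Finset MeasureTheory

lemma gft_add_rev_le_gft_add_gft (s b p q : ℝ) :
    gft s b p q + rev s b p q ≤ gft s b p p + gft s b q q := by
  unfold gft rev
  split_ifs <;> nlinarith

lemma sum_gft_add_sum_rev_le {ι : Type*} (I : Finset ι) (s b : ι → ℝ) (p q : ℝ) :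
    ∑ i ∈ I, gft (s i) (b i) p q + ∑ i ∈ I, rev (s i) (b i) p q ≤
      ∑ i ∈ I, gft (s i) (b i) p p + ∑ i ∈ I, gft (s i) (b i) q q := by
  simp only [← sum_add_distrib]
  exact sum_le_sum fun i _ => gft_add_rev_le_gft_add_gft _ _ _ _

lemma abs_gft_le (s b p q : ℝ) : |gft s b p q| ≤ |b - s| := by
  unfold gft
  split_ifs <;> simp

lemma abs_rev_le (s b p q : ℝ) : |rev s b p q| ≤ |q - p| := by
  unfold rev
  split_ifs <;> simp

lemma measurable_gft (s b : ℝ) : Measurable fun pq : ℝ × ℝ => gft s b pq.1 pq.2 := by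
  unfold gft
  exact ((measurable_const.ite (measurableSet_le measurable_const measurable_fst)
      measurable_const).mul (measurable_const.ite (measurableSet_le measurable_snd
      measurable_const) measurable_const)).mul measurable_const

lemma measurable_rev (s b : ℝ) : Measurable fun pq : ℝ × ℝ => rev s b pq.1 pq.2 := by
  unfold rev
  exact ((measurable_const.ite (measurableSet_le measurable_const measurable_fst)
      measurable_const).mul (measurable_const.ite (measurableSet_le measurable_snd
      measurable_const) measurable_const)).mul (measurable_snd.sub measurable_fst)

section Integrability

variable (μ : Measure (ℝ × ℝ)) [IsFiniteMeasure μ] (s b : ℝ)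

lemma integrable_gft : Integrable (fun pq : ℝ × ℝ => gft s b pq.1 pq.2) μ :=
  .of_bound (measurable_gft s b).aestronglyMeasurable |b - s|
    (ae_of_all _ fun pq => abs_gft_le s b pq.1 pq.2)

variable {μ} in
lemma integrable_rev (hμ : ∀ᵐ pq ∂μ, pq.1 ∈ Set.Icc (0:ℝ) 1 ∧ pq.2 ∈ Set.Icc (0:ℝ) 1) :
    Integrable (fun pq : ℝ × ℝ => rev s b pq.1 pq.2) μ := by
  refine .of_bound (measurable_rev s b).aestronglyMeasurable 1 ?_
  filter_upwards [hμ] with pq ⟨⟨hp0, hp1⟩, hq0, hq1⟩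
  refine (abs_rev_le s b pq.1 pq.2).trans (abs_le.2 ⟨?_, ?_⟩) <;> linarith

end Integrability

lemma integral_le_of_ae_add_le {α : Type*} [MeasurableSpace α] {μ : Measure α}
    [IsProbabilityMeasure μ] {f g : α → ℝ} {c : ℝ} (hf : Integrable f μ) (hg : Integrable g μ)
    (hfg : ∀ᵐ x ∂μ, f x + g x ≤ c) (hg0 : 0 ≤ ∫ x, g x ∂μ) : ∫ x, f x ∂μ ≤ c := by
  have h : ∫ x, f x + g x ∂μ ≤ ∫ _, c ∂μ :=
    integral_mono_ae (hf.add hg) (integrable_const c) hfg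
  rw [integral_add hf hg, integral_const, probReal_univ, one_smul] at h
  linarith

theorem stmt_14_general (T : ℕ) (s b : ℕ → ℝ)
    (pstar : ℝ)
    (hbest : ∀ p ∈ Set.Icc (0:ℝ) 1,
      ∑ t ∈ range T, gft (s t) (b t) p p ≤ ∑ t ∈ range T, gft (s t) (b t) pstar pstar)
    (γ : Measure (ℝ × ℝ)) [IsProbabilityMeasure γ]
    (hsupp : γ {pq : ℝ × ℝ | ¬ (pq.1 ∈ Set.Icc (0:ℝ) 1 ∧ pq.2 ∈ Set.Icc (0:ℝ) 1)} = 0)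
    (hrev : 0 ≤ ∫ pq, (∑ t ∈ range T, rev (s t) (b t) pq.1 pq.2) ∂γ) :
    ∫ pq, (∑ t ∈ range T, gft (s t) (b t) pq.1 pq.2) ∂γ ≤
      2 * ∑ t ∈ range T, gft (s t) (b t) pstar pstar := by
  have hae : ∀ᵐ pq ∂γ, pq.1 ∈ Set.Icc (0:ℝ) 1 ∧ pq.2 ∈ Set.Icc (0:ℝ) 1 := ae_iff.2 hsupp
  refine integral_le_of_ae_add_le (integrable_finsetSum _ fun t _ => integrable_gft γ _ _)
    (integrable_finsetSum _ fun t _ => integrable_rev _ _ hae) ?_ hrev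
  filter_upwards [hae] with pq ⟨hp, hq⟩
  linarith [sum_gft_add_sum_rev_le (range T) s b pq.1 pq.2, hbest _ hp, hbest _ hq]

/-- The best revenue-nonnegative distribution over price pairs extracts at most
twice the gain from trade of the best fixed price. -/
theorem stmt_14 (T : ℕ) (s b : ℕ → ℝ)
    (hvals : ∀ t, s t ∈ Set.Icc (0:ℝ) 1 ∧ b t ∈ Set.Icc (0:ℝ) 1)
    (pstar : ℝ) (hpstar : pstar ∈ Set.Icc (0:ℝ) 1)
    (hbest : ∀ p ∈ Set.Icc (0:ℝ) 1,
      ∑ t ∈ range T, gft (s t) (b t) p p ≤ ∑ t ∈ range T, gft (s t) (b t) pstar pstar)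
    (γ : Measure (ℝ × ℝ)) [IsProbabilityMeasure γ]
    (hsupp : γ {pq : ℝ × ℝ | ¬ (pq.1 ∈ Set.Icc (0:ℝ) 1 ∧ pq.2 ∈ Set.Icc (0:ℝ) 1)} = 0)
    (hrev : 0 ≤ ∫ pq, (∑ t ∈ range T, rev (s t) (b t) pq.1 pq.2) ∂γ) :
    ∫ pq, (∑ t ∈ range T, gft (s t) (b t) pq.1 pq.2) ∂γ ≤
      2 * ∑ t ∈ range T, gft (s t) (b t) pstar pstar :=
  stmt_14_general T s b pstar hbest γ hsupp hrev
end

section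
/- Consider the randomized valuation sequence in which each (s_t, b_t) is independently and uniformly one of (0, 1/4), (3/4, 1), (3/4, 1/4). For any deterministic choice of price pairs (p_t, q_t) ∈ [0,1]^2 (possibly depending on past realized valuations), the expected gain from trade at each step is at most 1/12, hence E[Σ_{t=1}^T GFT_t(p_t,q_t)] ≤ T/12. -/
open Finset

/-- The three possible valuation pairs of the lower-bound instance. -/
noncomputable def val : Fin 3 → ℝ × ℝ := ![(0, 1/4), (3/4, 1), (3/4, 1/4)]

lemma key (p q : ℝ) (hp : 0 ≤ p) (hq : q ≤ 1) :
    ∑ i : Fin 3, gft (val i).1 (val i).2 p q ≤ 1/4 := by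
  have h0 : val 0 = (0, 1/4) := rfl
  have h1 : val 1 = (3/4, 1) := rfl
  have h2 : val 2 = (3/4, 1/4) := rfl
  rw [Fin.sum_univ_three, h0, h1, h2]
  simp only [gft]
  norm_num
  split_ifs <;> norm_num <;> linarith

/-- Against i.i.d. uniform valuations over `{(0,1/4), (3/4,1), (3/4,1/4)}`, any
deterministic (adaptive) algorithm has expected total gain from trade at most `T/12`. -/
theorem stmt_19 (T : ℕ) (p q : (Fin T → Fin 3) → Fin T → ℝ)
    (hrange : ∀ ω t, p ω t ∈ Set.Icc (0:ℝ) 1 ∧ q ω t ∈ Set.Icc (0:ℝ) 1)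
    (hadapt : ∀ ω ω' t, (∀ t' : Fin T, t' < t → ω t' = ω' t') →
      p ω t = p ω' t ∧ q ω t = q ω' t) :
    (∑ ω : Fin T → Fin 3, ∑ t : Fin T,
        gft (val (ω t)).1 (val (ω t)).2 (p ω t) (q ω t)) / (3:ℝ)^T ≤ (T:ℝ) / 12 := by
  rw [div_le_div_iff₀ (by positivity) (by norm_num)]
  rw [Finset.sum_comm]
  have hstep : ∀ t : Fin T, ∑ ω : Fin T → Fin 3,
      gft (val (ω t)).1 (val (ω t)).2 (p ω t) (q ω t) ≤ (3:ℝ)^T / 12 := by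
    intro t
    set E := Equiv.piSplitAt t (fun _ : Fin T => Fin 3) with hE
    rw [← Equiv.sum_comp E.symm]
    rw [Fintype.sum_prod_type, Finset.sum_comm]
    have hsymm_t : ∀ (i : Fin 3) (g : {j : Fin T // j ≠ t} → Fin 3), E.symm (i, g) t = i := by
      intro i g; simp [hE, Equiv.piSplitAt]
    have hsymm_ne : ∀ (i : Fin 3) (g : {j : Fin T // j ≠ t} → Fin 3) (j : Fin T) (h : j ≠ t),
        E.symm (i, g) j = g ⟨j, h⟩ := by
      intro i g j h; simp [hE, Equiv.piSplitAt, h]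
    have hbound : ∀ g : {j : Fin T // j ≠ t} → Fin 3,
        ∑ i : Fin 3, gft (val (E.symm (i, g) t)).1 (val (E.symm (i, g) t)).2
          (p (E.symm (i, g)) t) (q (E.symm (i, g)) t) ≤ 1/4 := by
      intro g
      have hagree : ∀ i : Fin 3, p (E.symm (i, g)) t = p (E.symm (0, g)) t ∧
          q (E.symm (i, g)) t = q (E.symm (0, g)) t := by
        intro i
        apply hadapt
        intro t' ht'
        rw [hsymm_ne i g t' (ne_of_lt ht'), hsymm_ne 0 g t' (ne_of_lt ht')]
      calc ∑ i : Fin 3, gft (val (E.symm (i, g) t)).1 (val (E.symm (i, g) t)).2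
            (p (E.symm (i, g)) t) (q (E.symm (i, g)) t)
          = ∑ i : Fin 3, gft (val i).1 (val i).2 (p (E.symm (0, g)) t) (q (E.symm (0, g)) t) := by
            apply Finset.sum_congr rfl
            intro i _
            rw [hsymm_t, (hagree i).1, (hagree i).2]
        _ ≤ 1/4 := key _ _ (hrange _ t).1.1 (hrange _ t).2.2
    calc ∑ g : {j : Fin T // j ≠ t} → Fin 3, ∑ i : Fin 3,
          gft (val (E.symm (i, g) t)).1 (val (E.symm (i, g) t)).2
            (p (E.symm (i, g)) t) (q (E.symm (i, g)) t)
        ≤ ∑ _g : {j : Fin T // j ≠ t} → Fin 3, (1/4 : ℝ) :=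
          Finset.sum_le_sum fun g _ => hbound g
      _ = (Fintype.card ({j : Fin T // j ≠ t} → Fin 3) : ℝ) * (1/4) := by
          rw [Finset.sum_const, Finset.card_univ, nsmul_eq_mul]
      _ = (3:ℝ)^T / 12 := by
          have h1 : Fintype.card (Fin T → Fin 3) =
              Fintype.card (Fin 3 × ({j : Fin T // j ≠ t} → Fin 3)) :=
            Fintype.card_congr (Equiv.piSplitAt t (fun _ => Fin 3))
          rw [Fintype.card_prod, Fintype.card_fun] at h1
          simp only [Fintype.card_fin] at h1
          have h2 : ((3:ℝ))^T = 3 * (Fintype.card ({j : Fin T // j ≠ t} → Fin 3) : ℝ) := by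
            rw [show ((3:ℝ))^T = ((3^T : ℕ) : ℝ) by push_cast; ring, h1]
            push_cast; ring
          linarith
  have htot : ∑ t : Fin T, ∑ ω : Fin T → Fin 3,
        gft (val (ω t)).1 (val (ω t)).2 (p ω t) (q ω t) ≤ T * ((3:ℝ)^T / 12) := by
    calc ∑ t : Fin T, ∑ ω : Fin T → Fin 3,
          gft (val (ω t)).1 (val (ω t)).2 (p ω t) (q ω t)
        ≤ ∑ _t : Fin T, (3:ℝ)^T / 12 := Finset.sum_le_sum fun t _ => hstep t
      _ = T * ((3:ℝ)^T / 12) := by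
          rw [Finset.sum_const, Finset.card_univ, Fintype.card_fin, nsmul_eq_mul]
  nlinarith [htot]
end
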